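/- arXiv:2108.08887 — 4 statements merged into one kernel-verified Lean document; each statement's English description precedes it below -/
import Mathlib

section
/- Let $a_1,\dots,a_n,b_1,\dots,b_n \ge 0$ with $\sum_{i=1}^n a_i = \alpha > 0$ and $\sum_{i=1}^n b_i = \beta > 0$, and assume each $b_i > 0$. Then for all $p \ge 0$, $\sum_{i=1}^n b_i (1 + a_i^2/b_i^2)^{-p/2} \ge \beta / (1 + \alpha/\beta)^p$. -/
open Finset

/-- Bernoulli for nonpositive exponents: for `x > 0` and `q ≥ 0`, `1 - q(x-1) ≤ x^(-q)`. -/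
lemma bern_neg {x q : ℝ} (hx : 0 < x) (hq : 0 ≤ q) : 1 - q * (x - 1) ≤ x ^ (-q) := by
  have hxq : 0 < x ^ q := Real.rpow_pos_of_pos hx q
  have hxnq : 0 < x ^ (-q) := Real.rpow_pos_of_pos hx (-q)
  rcases le_or_gt (1 - q * (x - 1)) 0 with h0 | h0
  · linarith
  rcases le_total q 1 with hq1 | hq1
  · -- 0 ≤ q ≤ 1 : x^q ≤ 1 + q(x-1)
    have h1 : x ^ q ≤ 1 + q * (x - 1) := by
      have := rpow_one_add_le_one_add_mul_self (s := x - 1) (by linarith) hq hq1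
      simpa using this
    have e : x ^ (-q) * x ^ q = 1 := by
      rw [← Real.rpow_add hx]; simp
    nlinarith [sq_nonneg (q * (x - 1))]
  · -- 1 ≤ q : use Bernoulli on 1/x
    have hx' : 0 < 1 / x := by positivity
    have h1 : 1 + q * (1 / x - 1) ≤ (1 / x) ^ q := by
      have := one_add_mul_self_le_rpow_one_add (s := 1 / x - 1) (by linarith) hq1
      simpa using this
    have e : (1 / x) ^ q = x ^ (-q) := by
      rw [one_div, Real.inv_rpow hx.le, ← Real.rpow_neg hx.le]
    rw [e] at h1
    have hxx : x * (1 / x) = 1 := mul_one_div_cancel hx.ne'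
    nlinarith [sq_nonneg (x - 1), mul_nonneg (by linarith : (0:ℝ) ≤ q) (sq_nonneg (x - 1))]

theorem stmt_0 (n : ℕ) (a b : Fin n → ℝ) (α β : ℝ)
    (ha : ∀ i, 0 ≤ a i) (hb : ∀ i, 0 < b i)
    (hα : ∑ i, a i = α) (hβ : ∑ i, b i = β)
    (hα0 : 0 < α) (hβ0 : 0 < β) (p : ℝ) (hp : 0 ≤ p) :
    ∑ i, b i * (1 + (a i) ^ 2 / (b i) ^ 2) ^ (-(p / 2)) ≥ β / (1 + α / β) ^ p := by
  set c : ℝ := α / β with hc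
  have hc0 : 0 < c := div_pos hα0 hβ0
  have h1c : 0 < 1 + c := by linarith
  have hcp : 0 < (1 + c) ^ (-p) := Real.rpow_pos_of_pos h1c _
  -- termwise bound
  have hterm : ∀ i, (1 + c) ^ (-p) * (b i + p * (b i - (b i + a i) / (1 + c)))
      ≤ b i * (1 + (a i) ^ 2 / (b i) ^ 2) ^ (-(p / 2)) := by
    intro i
    have hbi := hb i
    have hai := ha i
    set t : ℝ := a i / b i with htdef
    have ht0 : 0 ≤ t := div_nonneg hai hbi.le
    have h1t : 0 < 1 + t := by linarith
    -- step 1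
    have hsq : (a i) ^ 2 / (b i) ^ 2 = t ^ 2 := by rw [htdef, div_pow]
    have e2 : ((1 + t) ^ (2:ℕ)) ^ (-(p / 2)) = (1 + t) ^ (-p) := by
      rw [← Real.rpow_natCast (1 + t) 2, ← Real.rpow_mul h1t.le]
      congr 1; ring
    have step1 : (1 + t) ^ (-p) ≤ (1 + (a i) ^ 2 / (b i) ^ 2) ^ (-(p / 2)) := by
      rw [hsq, ← e2]
      exact Real.rpow_le_rpow_of_nonpos (by positivity) (by nlinarith)
        (by linarith : -(p / 2) ≤ 0)
    -- step 2 : Bernoulli at u = (1+t)/(1+c)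
    set u : ℝ := (1 + t) / (1 + c) with hu
    have hu0 : 0 < u := div_pos h1t h1c
    have hbern : 1 - p * (u - 1) ≤ u ^ (-p) := bern_neg hu0 hp
    have emul : (1 + t) ^ (-p) = (1 + c) ^ (-p) * u ^ (-p) := by
      rw [hu, Real.div_rpow h1t.le h1c.le]
      field_simp
    have step2 : (1 + c) ^ (-p) * (1 - p * (u - 1)) ≤ (1 + t) ^ (-p) := by
      rw [emul]
      exact mul_le_mul_of_nonneg_left hbern hcp.le
    -- combine and rewrite left side
    have key : (1 + c) ^ (-p) * (b i + p * (b i - (b i + a i) / (1 + c)))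
        = b i * ((1 + c) ^ (-p) * (1 - p * (u - 1))) := by
      have hbt : b i * (1 + t) = b i + a i := by
        rw [htdef]; field_simp
      have : b i + p * (b i - (b i + a i) / (1 + c)) = b i * (1 - p * (u - 1)) := by
        rw [hu, ← hbt]
        field_simp
        ring
      rw [this]; ring
    calc (1 + c) ^ (-p) * (b i + p * (b i - (b i + a i) / (1 + c)))
        = b i * ((1 + c) ^ (-p) * (1 - p * (u - 1))) := key
      _ ≤ b i * (1 + t) ^ (-p) := mul_le_mul_of_nonneg_left step2 hbi.le
      _ ≤ b i * (1 + (a i) ^ 2 / (b i) ^ 2) ^ (-(p / 2)) :=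
          mul_le_mul_of_nonneg_left step1 hbi.le
  -- sum the lower bounds
  have hsum : ∑ i, (b i + p * (b i - (b i + a i) / (1 + c))) = β := by
    have h1 : ∑ i, (b i + p * (b i - (b i + a i) / (1 + c)))
        = (∑ i, b i) + p * ((∑ i, b i) - ((∑ i, b i) + (∑ i, a i)) / (1 + c)) := by
      rw [Finset.sum_add_distrib, ← Finset.mul_sum, Finset.sum_sub_distrib,
        ← Finset.sum_div, Finset.sum_add_distrib]
    rw [h1, hα, hβ]
    have h2 : (β + α) / (1 + c) = β := by
      rw [hc, div_eq_iff (by rw [← hc]; exact h1c.ne')]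
      field_simp
    rw [h2]; ring
  have hL : β / (1 + α / β) ^ p = (1 + c) ^ (-p) * β := by
    rw [← hc, Real.rpow_neg h1c.le, div_eq_inv_mul]
  rw [ge_iff_le, hL]
  calc (1 + c) ^ (-p) * β
      = ∑ i, (1 + c) ^ (-p) * (b i + p * (b i - (b i + a i) / (1 + c))) := by
        rw [← Finset.mul_sum, hsum]
    _ ≤ ∑ i, b i * (1 + (a i) ^ 2 / (b i) ^ 2) ^ (-(p / 2)) :=
        Finset.sum_le_sum fun i _ => hterm i
end

section
/- Let $A$ be positive definite, $\bar{c}, \Delta \in \mathbb{R}^d$ with $\bar{c} + \Delta \ne 0$. If $\|\bar{c}\|_{A^{-1}} - \frac{\bar{c}^T A^{-1}(\bar{c}+\Delta)}{\|\bar{c}+\Delta\|_{A^{-1}}} \ge \epsilon'$ for some $0 < \epsilon' \le \|\bar{c}\|_{A^{-1}}$, then $\Delta^T A^{-1} \Delta \ge 2\|\bar{c}\|_{A^{-1}} \epsilon' - \epsilon'^2 \ge \|\bar{c}\|_{A^{-1}} \epsilon'$. -/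
open Matrix

noncomputable def anorm {d : ℕ} (A : Matrix (Fin d) (Fin d) ℝ) (x : Fin d → ℝ) : ℝ :=
  Real.sqrt (x ⬝ᵥ (A⁻¹ *ᵥ x))

theorem stmt_10 (d : ℕ) (A : Matrix (Fin d) (Fin d) ℝ) (hA : A.PosDef)
    (cbar Δ : Fin d → ℝ) (hΔ : cbar + Δ ≠ 0)
    (ε' : ℝ) (hε0 : 0 < ε') (hεle : ε' ≤ anorm A cbar)
    (h : anorm A cbar - cbar ⬝ᵥ (A⁻¹ *ᵥ (cbar + Δ)) / anorm A (cbar + Δ) ≥ ε') :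
    Δ ⬝ᵥ (A⁻¹ *ᵥ Δ) ≥ 2 * anorm A cbar * ε' - ε' ^ 2 ∧
      2 * anorm A cbar * ε' - ε' ^ 2 ≥ anorm A cbar * ε' := by
  have hB : (A⁻¹).PosDef := hA.inv
  set s := cbar + Δ with hs
  have hq : 0 < s ⬝ᵥ (A⁻¹ *ᵥ s) := by
    have := hB.re_dotProduct_pos hΔ
    simpa using this
  have hcq : 0 ≤ cbar ⬝ᵥ (A⁻¹ *ᵥ cbar) := by
    have := hB.posSemidef.re_dotProduct_nonneg cbar
    simpa using this
  have hNs : 0 < anorm A s := Real.sqrt_pos.mpr hq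
  have hNs2 : anorm A s ^ 2 = s ⬝ᵥ (A⁻¹ *ᵥ s) := Real.sq_sqrt hq.le
  have hNc2 : anorm A cbar ^ 2 = cbar ⬝ᵥ (A⁻¹ *ᵥ cbar) := Real.sq_sqrt hcq
  -- inner product bound
  have hip : cbar ⬝ᵥ (A⁻¹ *ᵥ s) ≤ (anorm A cbar - ε') * anorm A s := by
    have h' : cbar ⬝ᵥ (A⁻¹ *ᵥ s) / anorm A s ≤ anorm A cbar - ε' := by linarith
    calc cbar ⬝ᵥ (A⁻¹ *ᵥ s) = (cbar ⬝ᵥ (A⁻¹ *ᵥ s) / anorm A s) * anorm A s := by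
          field_simp
      _ ≤ (anorm A cbar - ε') * anorm A s := by
          exact mul_le_mul_of_nonneg_right h' hNs.le
  -- symmetry
  have hsym : s ⬝ᵥ (A⁻¹ *ᵥ cbar) = cbar ⬝ᵥ (A⁻¹ *ᵥ s) := by
    have ht : A⁻¹ᵀ = A⁻¹ := by
      simpa using hB.isHermitian.eq
    rw [Matrix.dotProduct_mulVec, ← Matrix.mulVec_transpose, ht, dotProduct_comm]
  have hΔeq : Δ = s - cbar := by simp [hs]
  have key : Δ ⬝ᵥ (A⁻¹ *ᵥ Δ) =
      s ⬝ᵥ (A⁻¹ *ᵥ s) - 2 * (cbar ⬝ᵥ (A⁻¹ *ᵥ s)) + cbar ⬝ᵥ (A⁻¹ *ᵥ cbar) := by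
    rw [hΔeq]
    simp only [Matrix.mulVec_sub, sub_dotProduct, dotProduct_sub]
    rw [hsym]; ring
  constructor
  · nlinarith [sq_nonneg (anorm A s - (anorm A cbar - ε'))]
  · nlinarith
end

section
/- Let $A$ be positive definite and let $\bar{c}, \Delta \in \mathbb{R}^d$ with $\bar{c}, \bar{c}+\Delta, \bar{c}+2\Delta \ne 0$. If $\alpha_1 > \alpha_2 > 0$ and $\zeta \in \mathbb{R}^d$ are such that $\zeta + \alpha_1\bar{c} \ne 0$ and $\zeta + \alpha_2 \bar{c} \ne 0$, then $\frac{\bar{c}^T A^{-1}(\zeta + \alpha_1 \bar{c})}{\|\zeta + \alpha_1 \bar{c}\|_{A^{-1}}} \ge \frac{\bar{c}^T A^{-1}(\zeta + \alpha_2 \bar{c})}{\|\zeta + \alpha_2 \bar{c}\|_{A^{-1}}}$. -/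
open Matrix

set_option maxHeartbeats 1000000 in
private lemma key_ineq (a b s α₁ α₂ : ℝ) (hb : 0 < b) (hK : a ^ 2 ≤ b * s)
    (hα : α₂ < α₁) (hq1 : 0 < s + 2 * α₁ * a + α₁ ^ 2 * b)
    (hq2 : 0 < s + 2 * α₂ * a + α₂ ^ 2 * b) :
    (a + α₂ * b) / Real.sqrt (s + 2 * α₂ * a + α₂ ^ 2 * b) ≤
      (a + α₁ * b) / Real.sqrt (s + 2 * α₁ * a + α₁ ^ 2 * b) := by
  set q₁ := s + 2 * α₁ * a + α₁ ^ 2 * b with hq1d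
  set q₂ := s + 2 * α₂ * a + α₂ ^ 2 * b with hq2d
  have hs1 : (0:ℝ) < Real.sqrt q₁ := Real.sqrt_pos.mpr hq1
  have hs2 : (0:ℝ) < Real.sqrt q₂ := Real.sqrt_pos.mpr hq2
  have hsq1 : Real.sqrt q₁ ^ 2 = q₁ := Real.sq_sqrt hq1.le
  have hsq2 : Real.sqrt q₂ ^ 2 = q₂ := Real.sq_sqrt hq2.le
  rw [div_le_div_iff₀ hs2 hs1]
  -- goal: (a + α₂ * b) * sqrt q₁ ≤ (a + α₁ * b) * sqrt q₂
  set p₁ := a + α₁ * b with hp1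
  set p₂ := a + α₂ * b with hp2
  have hpp : p₂ < p₁ := by simp only [hp1, hp2]; nlinarith
  -- b * (p₁² * q₂ - p₂² * q₁) = (b*s - a²) * (p₁² - p₂²)
  have hkey : b * (p₁ ^ 2 * q₂ - p₂ ^ 2 * q₁) = (b * s - a ^ 2) * (p₁ ^ 2 - p₂ ^ 2) := by
    simp only [hp1, hp2, hq1d, hq2d]; ring
  rcases le_or_gt p₂ 0 with h2 | h2
  · rcases le_or_gt 0 p₁ with h1 | h1
    · nlinarith [hs1.le, hs2.le]
    · -- both negative: need p₁² q₂ ≤ p₂² q₁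
      have hsq : p₁ ^ 2 ≤ p₂ ^ 2 := by
        nlinarith [mul_self_le_mul_self (neg_nonneg.2 h1.le) (by linarith : -p₁ ≤ -p₂)]
      have hX : 0 ≤ b * (p₂ ^ 2 * q₁ - p₁ ^ 2 * q₂) := by
        nlinarith [mul_nonneg (by linarith : (0:ℝ) ≤ b * s - a ^ 2)
          (by linarith : (0:ℝ) ≤ p₂ ^ 2 - p₁ ^ 2)]
      have hq : p₁ ^ 2 * q₂ ≤ p₂ ^ 2 * q₁ := by nlinarith [hX, hb]
      have hx : 0 ≤ -p₂ * Real.sqrt q₁ := mul_nonneg (by linarith) hs1.le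
      have hy : 0 ≤ -p₁ * Real.sqrt q₂ := mul_nonneg (by linarith) hs2.le
      have h' : (-p₁ * Real.sqrt q₂) ^ 2 ≤ (-p₂ * Real.sqrt q₁) ^ 2 := by
        rw [mul_pow, mul_pow, hsq1, hsq2]; nlinarith
      have := (pow_le_pow_iff_left₀ hy hx two_ne_zero).mp h'
      linarith
  · have h1 : 0 < p₁ := lt_trans h2 hpp
    have hsq : p₂ ^ 2 ≤ p₁ ^ 2 := by
      nlinarith [mul_self_le_mul_self h2.le hpp.le]
    have hX : 0 ≤ b * (p₁ ^ 2 * q₂ - p₂ ^ 2 * q₁) := by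
      nlinarith [mul_nonneg (by linarith : (0:ℝ) ≤ b * s - a ^ 2)
        (by linarith : (0:ℝ) ≤ p₁ ^ 2 - p₂ ^ 2)]
    have hq : p₂ ^ 2 * q₁ ≤ p₁ ^ 2 * q₂ := by nlinarith [hX, hb]
    have hx : 0 ≤ p₂ * Real.sqrt q₁ := mul_nonneg h2.le hs1.le
    have hy : 0 ≤ p₁ * Real.sqrt q₂ := mul_nonneg h1.le hs2.le
    have h' : (p₂ * Real.sqrt q₁) ^ 2 ≤ (p₁ * Real.sqrt q₂) ^ 2 := by
      rw [mul_pow, mul_pow, hsq1, hsq2]; nlinarith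
    exact (pow_le_pow_iff_left₀ hx hy two_ne_zero).mp h'

set_option maxHeartbeats 1000000 in
theorem stmt_12 (d : ℕ) (A : Matrix (Fin d) (Fin d) ℝ) (hA : A.PosDef)
    (cbar : Fin d → ℝ) (hc : cbar ≠ 0) (ζ : Fin d → ℝ)
    (α₁ α₂ : ℝ) (h21 : α₂ < α₁) (h20 : 0 < α₂)
    (hz1 : ζ + α₁ • cbar ≠ 0) (hz2 : ζ + α₂ • cbar ≠ 0) :
    cbar ⬝ᵥ (A⁻¹ *ᵥ (ζ + α₁ • cbar)) / anorm A (ζ + α₁ • cbar) ≥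
      cbar ⬝ᵥ (A⁻¹ *ᵥ (ζ + α₂ • cbar)) / anorm A (ζ + α₂ • cbar) := by
  set B := A⁻¹ with hBdef
  have hB : B.PosDef := hA.inv
  have hsym : ∀ x y : Fin d → ℝ, x ⬝ᵥ B *ᵥ y = y ⬝ᵥ B *ᵥ x := by
    intro x y
    rw [dotProduct_mulVec, ← mulVec_transpose]
    have : Bᵀ = B := by
      have := hB.isHermitian
      rwa [Matrix.IsHermitian, conjTranspose_eq_transpose_of_trivial] at this
    rw [this, dotProduct_comm]
  set a := cbar ⬝ᵥ B *ᵥ ζ with ha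
  set b := cbar ⬝ᵥ B *ᵥ cbar with hbb
  set s := ζ ⬝ᵥ B *ᵥ ζ with hs
  have hb : 0 < b := by have := hB.dotProduct_mulVec_pos hc; rwa [star_trivial] at this
  have hexp1 : ∀ α : ℝ, cbar ⬝ᵥ B *ᵥ (ζ + α • cbar) = a + α * b := by
    intro α
    simp [mulVec_add, mulVec_smul, dotProduct_add, dotProduct_smul, smul_eq_mul, ha, hbb]
  have hexp2 : ∀ α : ℝ, (ζ + α • cbar) ⬝ᵥ B *ᵥ (ζ + α • cbar)
      = s + 2 * α * a + α ^ 2 * b := by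
    intro α
    simp only [mulVec_add, mulVec_smul, dotProduct_add, add_dotProduct, dotProduct_smul,
      smul_dotProduct, smul_eq_mul]
    rw [hsym ζ cbar]
    ring
  have hq1 : 0 < s + 2 * α₁ * a + α₁ ^ 2 * b := by
    rw [← hexp2 α₁]; have := hB.dotProduct_mulVec_pos hz1; rwa [star_trivial] at this
  have hq2 : 0 < s + 2 * α₂ * a + α₂ ^ 2 * b := by
    rw [← hexp2 α₂]; have := hB.dotProduct_mulVec_pos hz2; rwa [star_trivial] at this
  -- Cauchy-Schwarz: a² ≤ b * s
  have hK : a ^ 2 ≤ b * s := by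
    have hw : 0 ≤ (b • ζ - a • cbar) ⬝ᵥ B *ᵥ (b • ζ - a • cbar) :=
      by have := hB.posSemidef.dotProduct_mulVec_nonneg (b • ζ - a • cbar); rwa [star_trivial] at this
    simp only [mulVec_sub, mulVec_smul, dotProduct_sub, sub_dotProduct, dotProduct_smul,
      smul_dotProduct, smul_eq_mul] at hw
    rw [hsym ζ cbar] at hw
    nlinarith
  have key := key_ineq a b s α₁ α₂ hb hK h21 hq1 hq2
  unfold anorm
  rw [← hBdef, hexp1 α₁, hexp1 α₂, hexp2 α₁, hexp2 α₂]
  exact key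
end

section
/- Let $\hat{c}, \bar{c} \in \mathbb{R}^d$, $\Delta = \hat{c} - \bar{c}$, and let $w^*(c)$ denote a minimizer of $c^T w$ over a nonempty compact convex set $S$. If $\bar{c}^T(w^*(\hat{c}) - w^*(\bar{c})) \ge \epsilon$, then $\Delta^T(w^*(-\Delta) - w^*(\Delta)) \ge \epsilon$. -/
open Matrix

theorem stmt_18 (d : ℕ) (S : Set (Fin d → ℝ))
    (hS : S.Nonempty) (hcomp : IsCompact S) (hconv : Convex ℝ S)
    (wstar : (Fin d → ℝ) → (Fin d → ℝ))
    (hmem : ∀ c, wstar c ∈ S)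
    (hopt : ∀ c, ∀ w ∈ S, c ⬝ᵥ wstar c ≤ c ⬝ᵥ w)
    (chat cbar : Fin d → ℝ) (ε : ℝ) (hε : 0 < ε)
    (h : cbar ⬝ᵥ (wstar chat - wstar cbar) ≥ ε) :
    (chat - cbar) ⬝ᵥ (wstar (-(chat - cbar)) - wstar (chat - cbar)) ≥ ε := by
  have h1 := hopt chat (wstar cbar) (hmem cbar)
  have h2 := hopt (chat - cbar) (wstar chat) (hmem chat)
  have h3 := hopt (-(chat - cbar)) (wstar cbar) (hmem cbar)
  simp only [dotProduct_sub, sub_dotProduct, neg_dotProduct] at *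
  linarith
end
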